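/- arXiv:2203.02888 — 3 statements merged into one kernel-verified Lean document; each statement's English description precedes it below -/
import Mathlib

section
/- As θ → 0⁺ with s = sin(θ/2), the function I₁(θ) = (α₁+α₂)²/(α₁α₂) has the asymptotic expansion I₁ = −1/2 − (3/2)s + s² + (9/4)s³ − 2s⁴ + O(s⁵). -/
/-!
The double-angle formulas make `I₁` a rational function of `s = sin (θ / 2)` and
`w = cos (θ / 2)`. Modulo `s² + w² = 1` it differs from the quartic by `s⁵` times a rational
function whose denominator stays away from zero near `(s, w) = (0, 1)`.
-/

open Real

noncomputable section

def alpha₁ (θ : ℝ) : ℝ := cos θ / (cos θ - 1)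

def alpha₂ (θ : ℝ) : ℝ := -((cos θ - 1) + sin θ) / (2 * (cos θ - 1) * sin θ)

def I₁ (θ : ℝ) : ℝ := (alpha₁ θ + alpha₂ θ) ^ 2 / (alpha₁ θ * alpha₂ θ)

def I₁HalfAngle (s w : ℝ) : ℝ :=
  -(w + s - 4 * s ^ 2 * w) ^ 2 / (2 * w * (1 - 2 * s ^ 2) * (w - s))

def I₁TaylorPoly (s : ℝ) : ℝ := -1 / 2 - 3 / 2 * s + s ^ 2 + 9 / 4 * s ^ 3 - 2 * s ^ 4

/-- The factor `(1 + w)²` comes from `1 - w = s² / (1 + w)`. -/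
def I₁Remainder (s w : ℝ) : ℝ :=
  (18 + 21 * w + 2 * (9 * w - 8 - 8 * s * w) * (1 + w) ^ 2) /
    (4 * w * (1 - 2 * s ^ 2) * (1 + w) ^ 2)

end

theorem cos_eq_one_sub_two_mul_sin_half_sq (θ : ℝ) : cos θ = 1 - 2 * sin (θ / 2) ^ 2 := by
  have h := cos_two_mul_eq_one_sub (θ / 2)
  rwa [mul_div_cancel₀ _ two_ne_zero] at h

theorem sin_eq_two_mul_sin_half_mul_cos_half (θ : ℝ) :
    sin θ = 2 * sin (θ / 2) * cos (θ / 2) := by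
  have h := sin_two_mul (θ / 2)
  rwa [mul_div_cancel₀ _ two_ne_zero] at h

theorem alpha₁_eq (θ : ℝ) :
    alpha₁ θ = -(1 - 2 * sin (θ / 2) ^ 2) / (2 * sin (θ / 2) ^ 2) := by
  rw [alpha₁, cos_eq_one_sub_two_mul_sin_half_sq θ, sub_sub_cancel_left, div_neg, neg_div]

theorem alpha₂_eq {θ : ℝ} (hs : sin (θ / 2) ≠ 0) (hw : cos (θ / 2) ≠ 0) :
    alpha₂ θ = (cos (θ / 2) - sin (θ / 2)) / (4 * sin (θ / 2) ^ 2 * cos (θ / 2)) := by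
  rw [alpha₂, cos_eq_one_sub_two_mul_sin_half_sq θ, sin_eq_two_mul_sin_half_mul_cos_half θ,
    sub_sub_cancel_left]
  field_simp
  ring

theorem I₁_eq_I₁HalfAngle {θ : ℝ} (hs : 0 < sin (θ / 2))
    (hsw : sin (θ / 2) < cos (θ / 2)) :
    I₁ θ = I₁HalfAngle (sin (θ / 2)) (cos (θ / 2)) := by
  have hw : 0 < cos (θ / 2) := hs.trans hsw
  have h12 : 0 < 1 - 2 * sin (θ / 2) ^ 2 := by nlinarith [sin_sq_add_cos_sq (θ / 2)]
  have hws : 0 < cos (θ / 2) - sin (θ / 2) := by linarith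
  rw [I₁, alpha₁_eq, alpha₂_eq hs.ne' hw.ne', I₁HalfAngle]
  field_simp
  ring

theorem I₁HalfAngle_sub_I₁TaylorPoly {s w : ℝ} (hpyth : s ^ 2 + w ^ 2 = 1) (hs : 0 ≤ s)
    (hsw : s < w) :
    I₁HalfAngle s w - I₁TaylorPoly s = s ^ 5 * I₁Remainder s w := by
  have hw : 0 < w := hs.trans_lt hsw
  have h12 : 0 < 1 - 2 * s ^ 2 := by nlinarith
  have hws : 0 < w - s := by linarith
  rw [I₁HalfAngle, I₁TaylorPoly, I₁Remainder, div_sub' (by positivity), mul_div_assoc',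
    div_eq_div_iff (by positivity) (by positivity)]
  linear_combination (12 * s * w ^ 2 + 12 * s * w ^ 3 + 4 * s ^ 2 * w + 20 * s ^ 2 * w ^ 2
    + 16 * s ^ 2 * w ^ 3 - 60 * s ^ 3 * w ^ 2 - 66 * s ^ 3 * w ^ 3 - 4 * s ^ 4 * w
    - 62 * s ^ 4 * w ^ 2 - 64 * s ^ 4 * w ^ 3 + 72 * s ^ 5 * w ^ 2 + 84 * s ^ 5 * w ^ 3
    - 8 * s ^ 6 * w + 44 * s ^ 6 * w ^ 2 + 64 * s ^ 6 * w ^ 3) * hpyth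

theorem abs_I₁Remainder_le {s w : ℝ} (hs : 0 ≤ s) (hs' : s < 1 / 20) (hw : 9 / 10 < w)
    (hw' : w ≤ 1) :
    |I₁Remainder s w| ≤ 100 := by
  have hden : 9 / 5 ≤ 4 * w * (1 - 2 * s ^ 2) * (1 + w) ^ 2 :=
    calc (9 / 5 : ℝ) = 4 * (9 / 10) * (1 / 2) * 1 ^ 2 := by norm_num
      _ ≤ 4 * w * (1 - 2 * s ^ 2) * (1 + w) ^ 2 := by gcongr <;> nlinarith
  have hfactor : |9 * w - 8 - 8 * s * w| ≤ 1 := abs_le.2 ⟨by nlinarith, by nlinarith⟩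
  have hnum : |18 + 21 * w + 2 * (9 * w - 8 - 8 * s * w) * (1 + w) ^ 2| ≤ 47 :=
    calc _ ≤ |18 + 21 * w| + 2 * |9 * w - 8 - 8 * s * w| * (1 + w) ^ 2 := by
          grw [abs_add_le, abs_mul, abs_mul, abs_two, abs_sq]
      _ ≤ 39 + 2 * 1 * 2 ^ 2 := by
          rw [abs_of_pos (by linarith)]
          gcongr <;> linarith
      _ = 47 := by norm_num
  rw [I₁Remainder, abs_div, abs_of_pos (a := 4 * w * _ * _) (by linarith),
    div_le_iff₀ (by linarith)]
  linarith

/-- asymptotic expansion of `I₁(θ) = (α₁+α₂)²/(α₁α₂)` as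
`θ → 0⁺`, with `s = sin(θ/2)`: `I₁ = −1/2 − (3/2)s + s² + (9/4)s³ − 2s⁴ + O(s⁵)`. -/
theorem I1_asymptotic :
    ∃ C > (0 : ℝ), ∃ δ > (0 : ℝ), ∀ θ : ℝ, 0 < θ → θ < δ →
      |(cos θ / (cos θ - 1) +
            -((cos θ - 1) + sin θ) / (2 * (cos θ - 1) * sin θ)) ^ 2 /
          (cos θ / (cos θ - 1) *
            (-((cos θ - 1) + sin θ) / (2 * (cos θ - 1) * sin θ))) -
        (-1 / 2 - 3 / 2 * sin (θ / 2) + sin (θ / 2) ^ 2 +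
          9 / 4 * sin (θ / 2) ^ 3 - 2 * sin (θ / 2) ^ 4)| ≤
      C * sin (θ / 2) ^ 5 := by
  refine ⟨100, by norm_num, 1 / 10, by norm_num, fun θ hθ hθδ => ?_⟩
  have hs : 0 < sin (θ / 2) := sin_pos_of_pos_of_lt_pi (by linarith) (by linarith [pi_gt_three])
  have hs' : sin (θ / 2) < 1 / 20 := (sin_lt (by linarith)).trans (by linarith)
  have hw : 9 / 10 < cos (θ / 2) := by nlinarith [one_sub_sq_div_two_le_cos (x := θ / 2)]
  have hsw : sin (θ / 2) < cos (θ / 2) := by linarith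
  change |I₁ θ - I₁TaylorPoly (sin (θ / 2))| ≤ _
  rw [I₁_eq_I₁HalfAngle hs hsw,
    I₁HalfAngle_sub_I₁TaylorPoly (sin_sq_add_cos_sq _) hs.le hsw, abs_mul,
    abs_of_pos (by positivity), mul_comm]
  exact mul_le_mul_of_nonneg_right (abs_I₁Remainder_le hs.le hs' hw (cos_le_one _))
    (by positivity)
end

section
/- As θ → 0⁺ with s = sin(θ/2), the function I₃(θ) = (α₁+α₄)²/(α₁α₄), where α₁ = cos θ/(cos θ−1) and α₄ = 1/sin θ, has the asymptotic expansion I₃ = −1/s + 2 + (3/2)s − (27/8)s³ + O(s⁵). -/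
/-!
With `s = sin (θ/2)` and `c = cos (θ/2)` we have `cos θ = 1 - 2 s²` and `sin θ = 2 s c`, so `I₃`
becomes `2 - (1 - 2 s²) c / s - s / ((1 - 2 s²) c)`. Multiplying the error by the denominator
`s c (1 - 2 s²) ≍ s` leaves `c P(s) - Q(s)` for two explicit polynomials `P`, `Q`. Since `c² = 1 - s²`,
the conjugate product `(c P - Q)(c P + Q) = (1 - s²) P² - Q²` is a polynomial divisible by `s⁶`,
while `c P + Q` stays near `2`; hence `c P - Q = O(s⁶)` and the error is `O(s⁵)`.
-/

open Real

noncomputable def i3HalfAngle (s c : ℝ) : ℝ :=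
  2 - (1 - 2 * s ^ 2) * c / s - s / ((1 - 2 * s ^ 2) * c)

noncomputable def i3Approx (s : ℝ) : ℝ :=
  -1 / s + 2 + 3 / 2 * s - 27 / 8 * s ^ 3

noncomputable def i3P (s : ℝ) : ℝ :=
  (1 - 2 * s ^ 2) * (1 - 3 / 2 * s ^ 2 + 27 / 8 * s ^ 4)

noncomputable def i3Q (s : ℝ) : ℝ :=
  (1 - 2 * s ^ 2) ^ 2 * (1 - s ^ 2) + s ^ 2

lemma I3_eq_i3HalfAngle {s c : ℝ} (hs : s ≠ 0) (hc : c ≠ 0) (h : 1 - 2 * s ^ 2 ≠ 0) :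
    ((1 - 2 * s ^ 2) / (1 - 2 * s ^ 2 - 1) + 1 / (2 * s * c)) ^ 2 /
        ((1 - 2 * s ^ 2) / (1 - 2 * s ^ 2 - 1) * (1 / (2 * s * c))) =
      i3HalfAngle s c := by
  unfold i3HalfAngle
  field_simp
  ring

lemma i3HalfAngle_sub_i3Approx_mul {s c : ℝ} (hs : s ≠ 0) (hc : c ≠ 0)
    (h : 1 - 2 * s ^ 2 ≠ 0) (hsc : c ^ 2 = 1 - s ^ 2) :
    (i3HalfAngle s c - i3Approx s) * (s * c * (1 - 2 * s ^ 2)) = c * i3P s - i3Q s := by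
  unfold i3HalfAngle i3Approx i3P i3Q
  field_simp
  linear_combination (-16 * (1 - 2 * s ^ 2) ^ 2) * hsc

lemma mul_i3P_sub_i3Q_mul_add {s c : ℝ} (hsc : c ^ 2 = 1 - s ^ 2) :
    (c * i3P s - i3Q s) * (c * i3P s + i3Q s) =
      s ^ 6 * (-89 / 8 + 3201 / 64 * s ^ 2 - 7037 / 64 * (s ^ 2) ^ 2 + 925 / 8 * (s ^ 2) ^ 3 -
        729 / 16 * (s ^ 2) ^ 4) := by
  linear_combination (norm := (unfold i3P i3Q; ring)) i3P s ^ 2 * hsc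

lemma abs_quartic_le {t : ℝ} (h0 : 0 ≤ t) (h1 : t ≤ 1 / 16) :
    |-89 / 8 + 3201 / 64 * t - 7037 / 64 * t ^ 2 + 925 / 8 * t ^ 3 - 729 / 16 * t ^ 4| ≤ 16 := by
  have h2 : t ^ 2 ≤ t / 16 := by nlinarith
  have h3 : t ^ 3 ≤ t ^ 2 / 16 := by nlinarith
  have h4 : t ^ 4 ≤ t ^ 3 / 16 := by nlinarith
  rw [abs_le]
  constructor <;> nlinarith [pow_nonneg h0 2, pow_nonneg h0 3, pow_nonneg h0 4]

section SmallHalfAngle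

variable {s c : ℝ} (hs : 0 < s) (hs' : s ≤ 1 / 4) (hc : 0 < c) (hsc : c ^ 2 = 1 - s ^ 2)
include hs hs' hc hsc

lemma abs_mul_i3P_sub_i3Q_le : |c * i3P s - i3Q s| ≤ 64 / 3 * s ^ 6 := by
  have hs2 : s ^ 2 ≤ 1 / 16 := by nlinarith
  have hP : 0 ≤ i3P s := mul_nonneg (by linarith) (by nlinarith [pow_nonneg hs.le 4])
  have hQ : 3 / 4 ≤ i3Q s := by unfold i3Q; nlinarith
  have hsum : 3 / 4 ≤ c * i3P s + i3Q s := by nlinarith [mul_nonneg hc.le hP]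
  have hconj : |c * i3P s - i3Q s| * (c * i3P s + i3Q s) ≤ 16 * s ^ 6 := by
    rw [← abs_of_pos (by linarith : 0 < c * i3P s + i3Q s), ← abs_mul,
      mul_i3P_sub_i3Q_mul_add hsc, abs_mul, abs_of_nonneg (by positivity : 0 ≤ s ^ 6), mul_comm]
    exact mul_le_mul_of_nonneg_right (abs_quartic_le (by positivity) hs2) (by positivity)
  nlinarith [abs_nonneg (c * i3P s - i3Q s)]

lemma abs_i3HalfAngle_sub_i3Approx_le : |i3HalfAngle s c - i3Approx s| ≤ 40 * s ^ 5 := by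
  have hs2 : s ^ 2 ≤ 1 / 16 := by nlinarith
  have hc' : 3 / 4 ≤ c := by nlinarith
  have hden : 21 / 32 * s ≤ s * c * (1 - 2 * s ^ 2) := by nlinarith [mul_pos hs hc]
  have hprod : |i3HalfAngle s c - i3Approx s| * (s * c * (1 - 2 * s ^ 2)) ≤ 64 / 3 * s ^ 6 := by
    rw [← abs_of_pos (by linarith : 0 < s * c * (1 - 2 * s ^ 2)), ← abs_mul,
      i3HalfAngle_sub_i3Approx_mul hs.ne' hc.ne' (by nlinarith) hsc]
    exact abs_mul_i3P_sub_i3Q_le hs hs' hc hsc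
  have hlow : |i3HalfAngle s c - i3Approx s| * (21 / 32 * s) ≤ 64 / 3 * s ^ 6 :=
    (mul_le_mul_of_nonneg_left hden (abs_nonneg _)).trans hprod
  refine le_of_mul_le_mul_right ?_ hs
  nlinarith [pow_pos hs 6]

end SmallHalfAngle

/-- asymptotic expansion of `I₃(θ) = (α₁+α₄)²/(α₁α₄)` as
`θ → 0⁺`, with `s = sin(θ/2)`: `I₃ = −1/s + 2 + (3/2)s − (27/8)s³ + O(s⁵)`. -/
theorem I3_asymptotic :
    ∃ C > (0 : ℝ), ∃ δ > (0 : ℝ), ∀ θ : ℝ, 0 < θ → θ < δ →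
      |(cos θ / (cos θ - 1) + 1 / sin θ) ^ 2 /
          (cos θ / (cos θ - 1) * (1 / sin θ)) -
        (-1 / sin (θ / 2) + 2 + 3 / 2 * sin (θ / 2) -
          27 / 8 * sin (θ / 2) ^ 3)| ≤
      C * sin (θ / 2) ^ 5 := by
  refine ⟨40, by norm_num, 1 / 2, by norm_num, fun θ hθ hθδ => ?_⟩
  have hs : 0 < sin (θ / 2) := sin_pos_of_pos_of_lt_pi (by linarith) (by linarith [pi_gt_three])
  have hs' : sin (θ / 2) ≤ 1 / 4 := (sin_le (by linarith)).trans (by linarith)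
  have hc : 0 < cos (θ / 2) :=
    cos_pos_of_mem_Ioo ⟨by linarith [pi_gt_three], by linarith [pi_gt_three]⟩
  have hcos : cos θ = 1 - 2 * sin (θ / 2) ^ 2 := by
    rw [← cos_two_mul_eq_one_sub, mul_div_cancel₀ θ two_ne_zero]
  have hsin : sin θ = 2 * sin (θ / 2) * cos (θ / 2) := by
    rw [← sin_two_mul, mul_div_cancel₀ θ two_ne_zero]
  rw [hcos, hsin, I3_eq_i3HalfAngle hs.ne' hc.ne' (by nlinarith)]
  exact abs_i3HalfAngle_sub_i3Approx_le hs hs' hc (cos_sq' _)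
end

section
/- With s = sin(θ/2) and S₁₂(θ) = I₁(θ)/(2(cos θ − 1)) where I₁ = (α₁+α₂)²/(α₁α₂) (αⱼ as in the lightlike decomposition construction), one has the asymptotic expansion S₁₂ = 1/(8s²) + 3/(8s) − 1/4 − (9/16)s + (1/2)s² + O(s³) as θ → 0⁺. -/
open Real


private lemma l_hN0 (s c : ℝ) (hc2 : s ^ 2 + c ^ 2 = 1) :
    6*s*c - 6*s*c^2 + 2*s^2 + 6*s^2*c - 8*s^2*c^2 - 24*s^3*c + 21*s^3*c^2
      - 21*s^4*c + 16*s^4*c^2 + 16*s^5*c - 18*s^5*c^2 + 18*s^6*c + 16*s^6*c^2 - 16*s^7*c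
    = -6*s + 6*s*c - 6*s^2 + 6*s^2*c + 27*s^3 - 24*s^3*c + 24*s^4 - 21*s^4*c
      - 39*s^5 + 16*s^5*c + 18*s^6*c + 18*s^7 - 16*s^7*c - 16*s^8 := by
  linear_combination (-6*s - 8*s^2 + 21*s^3 + 16*s^4 - 18*s^5 + 16*s^6) * hc2

set_option maxHeartbeats 1000000 in
private lemma l_ha (s c : ℝ) (hs0 : 0 < s) (hc0 : 0 < c) (h12 : (0:ℝ) < 1 - 2*s^2)
    (hcs : 0 < c - s) :
    ((1 - 2*s^2) / (1 - 2*s^2 - 1) +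
          -((1 - 2*s^2 - 1) + 2*s*c) / (2 * (1 - 2*s^2 - 1) * (2*s*c))) ^ 2 /
        ((1 - 2*s^2) / (1 - 2*s^2 - 1) *
          (-((1 - 2*s^2 - 1) + 2*s*c) / (2 * (1 - 2*s^2 - 1) * (2*s*c)))) /
        (2 * (1 - 2*s^2 - 1)) -
      (1 / (8 * s ^ 2) + 3 / (8 * s) - 1 / 4 - 9 / 16 * s + 1 / 2 * s ^ 2)
    = (6*s*c - 6*s*c^2 + 2*s^2 + 6*s^2*c - 8*s^2*c^2 - 24*s^3*c + 21*s^3*c^2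
      - 21*s^4*c + 16*s^4*c^2 + 16*s^5*c - 18*s^5*c^2 + 18*s^6*c + 16*s^6*c^2 - 16*s^7*c)
      / (16 * s^2 * c * (1 - 2*s^2) * (c - s)) := by
  have ha1 : (1 - 2*s^2) / (1 - 2*s^2 - 1) = (1 - 2*s^2) / (-(2*s^2)) := by
    rw [div_eq_div_iff (by nlinarith) (by nlinarith)]; ring
  have ha2 : -((1 - 2*s^2 - 1) + 2*s*c) / (2 * (1 - 2*s^2 - 1) * (2*s*c))
      = (c - s) / (4*s^2*c) := by
    rw [div_eq_div_iff (by nlinarith [mul_pos (mul_pos hs0 hs0) (mul_pos hs0 hc0)])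
      (by positivity)]
    ring
  rw [ha1, ha2]
  field_simp
  ring

private lemma l_hB (s : ℝ) (hs0 : 0 < s) (hs4 : s < 1/4) :
    0 ≤ 6*s + 6*s^2 - 24*s^3 - 21*s^4 + 16*s^5 + 18*s^6 - 16*s^7 := by
  have hs2 : s^2 < 1/16 := by nlinarith
  have h3 : s^3 < 1/64 := by nlinarith [mul_lt_mul_of_pos_left hs2 hs0]
  have h4 : s^4 < 1/256 := by nlinarith [mul_lt_mul_of_pos_left hs2 (mul_pos hs0 hs0)]
  have h6 : s^6 < 1/64 := by nlinarith [mul_lt_mul_of_pos_left h4 (mul_pos hs0 hs0)]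
  nlinarith [mul_lt_mul_of_pos_left hs2 hs0, mul_lt_mul_of_pos_left h3 hs0,
    mul_lt_mul_of_pos_left h6 hs0, mul_pos hs0 hs0, pow_pos hs0 5, pow_pos hs0 6]

private lemma l_pows (s : ℝ) (hs0 : 0 < s) (hs4 : s < 1/4) :
    s^6 ≤ s^5 * (1/4) ∧ s^7 ≤ s^5 * (1/16) ∧ s^8 ≤ s^5 * (1/64) ∧
    s^9 ≤ s^5 * (1/256) ∧ s^10 ≤ s^5 * (1/1024) ∧ s^11 ≤ s^5 * (1/4096) := by
  have hp6 : s^6 ≤ s^5 * (1/4) := by nlinarith [pow_pos hs0 5]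
  have hp7 : s^7 ≤ s^5 * (1/16) := by nlinarith [pow_pos hs0 5, pow_pos hs0 6]
  have hp8 : s^8 ≤ s^5 * (1/64) := by nlinarith [pow_pos hs0 5, pow_pos hs0 6, pow_pos hs0 7]
  have hp9 : s^9 ≤ s^5 * (1/256) := by nlinarith [pow_pos hs0 8, hp8]
  have hp10 : s^10 ≤ s^5 * (1/1024) := by nlinarith [pow_pos hs0 9, hp9]
  have hp11 : s^11 ≤ s^5 * (1/4096) := by nlinarith [pow_pos hs0 10, hp10]
  exact ⟨hp6, hp7, hp8, hp9, hp10, hp11⟩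

set_option maxHeartbeats 1000000 in
private lemma l_hi (s c : ℝ) (hs0 : 0 < s) (hs4 : s < 1/4) (hchi : c ≤ 1 - s^2/2)
    (hB : 0 ≤ 6*s + 6*s^2 - 24*s^3 - 21*s^4 + 16*s^5 + 18*s^6 - 16*s^7) :
    -6*s + 6*s*c - 6*s^2 + 6*s^2*c + 27*s^3 - 24*s^3*c + 24*s^4 - 21*s^4*c
      - 39*s^5 + 16*s^5*c + 18*s^6*c + 18*s^7 - 16*s^7*c - 16*s^8 ≤ 160 * s^5 := by
  obtain ⟨hp6, hp7, hp8, hp9, hp10, hp11⟩ := l_pows s hs0 hs4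
  nlinarith [mul_le_mul_of_nonneg_left hchi hB, hp6, hp7, hp8, hp9,
    pow_pos hs0 5, pow_pos hs0 7, pow_pos hs0 8]

set_option maxHeartbeats 1000000 in
private lemma l_lo (s c : ℝ) (hs0 : 0 < s) (hs4 : s < 1/4) (hclo : 1 - s^2/2 - s^4/2 ≤ c)
    (hB : 0 ≤ 6*s + 6*s^2 - 24*s^3 - 21*s^4 + 16*s^5 + 18*s^6 - 16*s^7) :
    -(160 * s^5) ≤ -6*s + 6*s*c - 6*s^2 + 6*s^2*c + 27*s^3 - 24*s^3*c + 24*s^4 - 21*s^4*c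
      - 39*s^5 + 16*s^5*c + 18*s^6*c + 18*s^7 - 16*s^7*c - 16*s^8 := by
  obtain ⟨hp6, hp7, hp8, hp9, hp10, hp11⟩ := l_pows s hs0 hs4
  nlinarith [mul_le_mul_of_nonneg_left hclo hB, hp6, hp7, hp8, hp10, hp11,
    pow_pos hs0 5, pow_pos hs0 6, pow_pos hs0 7, pow_pos hs0 11]

private lemma l_cbounds (s c : ℝ) (hs0 : 0 < s) (hs4 : s < 1/4) (hc0 : 0 < c)
    (hc2 : s ^ 2 + c ^ 2 = 1) :
    c ≤ 1 - s^2/2 ∧ 1 - s^2/2 - s^4/2 ≤ c := by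
  constructor
  · nlinarith [sq_nonneg (s^2/2), sq_nonneg (c - (1 - s^2/2))]
  · nlinarith [sq_nonneg (c - (1 - s^2/2 - s^4/2)), sq_nonneg s, sq_nonneg (s^2)]

private lemma l_den (s c : ℝ) (hs0 : 0 < s) (hs4 : s < 1/4) (hchalf : 1/2 ≤ c)
    (h12' : (7:ℝ)/8 ≤ 1 - 2*s^2) (hcs4 : (1:ℝ)/4 ≤ c - s) :
    s^2 ≤ 16 * s^2 * c * (1 - 2*s^2) * (c - s) := by
  have hA1 : (7:ℝ)/16 ≤ c * (1 - 2*s^2) := by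
    nlinarith [mul_nonneg (by linarith : (0:ℝ) ≤ c - 1/2) (by linarith : (0:ℝ) ≤ 1 - 2*s^2 - 7/8)]
  have hA2 : (7:ℝ)/64 ≤ c * (1 - 2*s^2) * (c - s) := by
    nlinarith [mul_nonneg (by linarith : (0:ℝ) ≤ c * (1 - 2*s^2) - 7/16)
      (by linarith : (0:ℝ) ≤ (c - s) - 1/4)]
  nlinarith [mul_le_mul_of_nonneg_right hA2 (sq_nonneg s)]

private lemma l_final (Nv s den : ℝ) (habs : |Nv| ≤ 160 * s^5) (hden : s^2 ≤ den)
    (hpos : 0 < den) (hs0 : 0 < s) : |Nv / den| ≤ 160 * s^3 := by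
  rw [abs_div, abs_of_pos hpos, div_le_iff₀ hpos]
  nlinarith [mul_le_mul_of_nonneg_left hden (by positivity : (0:ℝ) ≤ 160 * s^3),
    abs_nonneg Nv]

set_option maxHeartbeats 1000000 in
/-- asymptotic expansion of `S₁₂ = I₁/(2(cos θ − 1))` with
`I₁ = (α₁+α₂)²/(α₁α₂)` and `s = sin(θ/2)`, as `θ → 0⁺`:
`S₁₂ = 1/(8s²) + 3/(8s) − 1/4 − (9/16)s + (1/2)s² + O(s³)`. -/
theorem S12_asymptotic :
    ∃ C > (0 : ℝ), ∃ δ > (0 : ℝ), ∀ θ : ℝ, 0 < θ → θ < δ →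
      |(cos θ / (cos θ - 1) +
            -((cos θ - 1) + sin θ) / (2 * (cos θ - 1) * sin θ)) ^ 2 /
          (cos θ / (cos θ - 1) *
            (-((cos θ - 1) + sin θ) / (2 * (cos θ - 1) * sin θ))) /
          (2 * (cos θ - 1)) -
        (1 / (8 * sin (θ / 2) ^ 2) + 3 / (8 * sin (θ / 2)) - 1 / 4 -
          9 / 16 * sin (θ / 2) + 1 / 2 * sin (θ / 2) ^ 2)| ≤
      C * sin (θ / 2) ^ 3 := by
  refine ⟨160, by norm_num, 1/2, by norm_num, ?_⟩
  intro θ hθ hδ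
  have hπ := Real.pi_gt_three
  have hθ2 : 0 < θ / 2 := by linarith
  have hθ2' : θ / 2 < 1 / 4 := by linarith
  have hcos : cos θ = 1 - 2 * sin (θ/2) ^ 2 := by
    have h := Real.cos_two_mul (θ/2)
    have h2 := Real.sin_sq_add_cos_sq (θ/2)
    rw [show (2:ℝ) * (θ/2) = θ by ring] at h
    linarith
  have hsin : sin θ = 2 * sin (θ/2) * cos (θ/2) := by
    have h := Real.sin_two_mul (θ/2)
    rw [show (2:ℝ) * (θ/2) = θ by ring] at h
    exact h
  rw [hcos, hsin]
  set s := sin (θ/2) with hs_def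
  set c := cos (θ/2) with hc_def
  have hs0 : 0 < s := Real.sin_pos_of_pos_of_lt_pi hθ2 (by linarith)
  have hs4 : s < 1/4 := lt_of_lt_of_le (Real.sin_lt hθ2) hθ2'.le
  have hc2 : s ^ 2 + c ^ 2 = 1 := Real.sin_sq_add_cos_sq (θ/2)
  have hc0 : 0 < c := Real.cos_pos_of_mem_Ioo ⟨by linarith, by linarith⟩
  obtain ⟨hchi, hclo⟩ := l_cbounds s c hs0 hs4 hc0 hc2
  have hchalf : 1/2 ≤ c := by nlinarith
  have h12' : (7:ℝ)/8 ≤ 1 - 2*s^2 := by nlinarith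
  have h12 : (0:ℝ) < 1 - 2*s^2 := by linarith
  have hcs4 : (1:ℝ)/4 ≤ c - s := by linarith
  have hcs : 0 < c - s := by linarith
  rw [l_ha s c hs0 hc0 h12 hcs, l_hN0 s c hc2]
  have hB := l_hB s hs0 hs4
  exact l_final _ s _
    (abs_le.mpr ⟨l_lo s c hs0 hs4 hclo hB, l_hi s c hs0 hs4 hchi hB⟩)
    (l_den s c hs0 hs4 hchalf h12' hcs4)
    (by positivity) hs0
end
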